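/- arXiv:1407.7917 — 7 statements merged into one kernel-verified Lean document; each statement's English description precedes it below -/
import Mathlib

section
/- For every real number ε with 0 < ε < 1 and every natural number i ≥ 1, the sum over j from 0 to i−1 of ((2−ε)^i / 2^{i−j} − (2−ε)^j) is strictly less than −ε·(2−ε)^i + (1+ε)·(2−ε). -/
/-!
Both sums are geometric: with `a = 2 - ε > 1` the sum equals
`a^i - (a/2)^i - (a^i - 1)/(a - 1)`, and the bound exceeds it by
`(2 - a)^2 (a^i - a)/(a - 1) + 1 + (a/2)^i`, which is positive because `a^i ≥ a` for `i ≥ 1`.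
-/

open Finset

lemma sum_range_div_two_pow_sub {K : Type*} [Field K] [NeZero (2 : K)] (x : K) (n : ℕ) :
    ∑ j ∈ range n, x / 2 ^ (n - j) = x - x / 2 ^ n := by
  induction n with
  | zero => simp
  | succ n ih =>
    simp only [sum_range_succ', Nat.add_sub_add_right, ih, Nat.sub_zero]
    field_simp
    ring

lemma pow_sub_geom_sum_le {a : ℝ} (ha : 1 < a) {n : ℕ} (hn : 1 ≤ n) :
    a ^ n - ∑ j ∈ range n, a ^ j ≤ (a - 2) * a ^ n + (3 - a) * a - 1 := by
  have ha₁ : 0 < a - 1 := sub_pos.2 ha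
  have hpow : a ≤ a ^ n := by simpa using pow_le_pow_right₀ ha.le hn
  have slack : (a - 2) * a ^ n + (3 - a) * a - 1 - (a ^ n - (a ^ n - 1) / (a - 1))
      = (a - 2) ^ 2 * (a ^ n - a) / (a - 1) := by
    field_simp
    ring
  rw [geom_sum_eq ha.ne', ← sub_nonneg, slack]
  exact div_nonneg (mul_nonneg (sq_nonneg _) (sub_nonneg.2 hpow)) ha₁.le

theorem todolist_potential_change_general (ε : ℝ) (hε1 : ε < 1) (i : ℕ) (hi : 1 ≤ i) :
    ∑ j ∈ Finset.range i, ((2 - ε) ^ i / 2 ^ (i - j) - (2 - ε) ^ j)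
      < -ε * (2 - ε) ^ i + (1 + ε) * (2 - ε) := by
  have ha : 1 < 2 - ε := by linarith
  have hgeom := pow_sub_geom_sum_le ha hi
  have hhalf : 0 < (2 - ε) ^ i / 2 ^ i := by positivity
  rw [sum_sub_distrib, sum_range_div_two_pow_sub]
  linear_combination hgeom + hhalf + (one_pos : (0 : ℝ) < 1)

/-- Potential-change estimate for todolist insertion:
`∑_{j=0}^{i-1} ((2-ε)^i / 2^(i-j) - (2-ε)^j) < -ε(2-ε)^i + (1+ε)(2-ε)`. -/
theorem todolist_potential_change (ε : ℝ) (hε0 : 0 < ε) (hε1 : ε < 1) (i : ℕ) (hi : 1 ≤ i) :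
    ∑ j ∈ Finset.range i, ((2 - ε) ^ i / 2 ^ (i - j) - (2 - ε) ^ j)
      < -ε * (2 - ε) ^ i + (1 + ε) * (2 - ε) :=
  todolist_potential_change_general ε hε1 i hi
end

section
/- Let α be a linear order and let S and T be finite subsets of α such that the pair (S, T) satisfies the skip property. Fix x ∈ α. (a) If the set {t ∈ T : t < x} is nonempty and S has no element less than x, then {t ∈ T : t < x} has exactly one element. (b) If u is the greatest element of {s ∈ S : s < x}, then the greatest element of {t ∈ T : t < x} is either u itself or the least element of {t ∈ T : u < t}. -/
/-- A pair `(S, T)` of finite subsets of a linear order satisfies the *skip property* if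
`S ⊆ T` and for every two elements `y < z` of `T` with no element of `T` strictly between
them, `y ∈ S` or `z ∈ S`. -/
def SkipProperty {α : Type*} [LinearOrder α] (S T : Finset α) : Prop :=
  S ⊆ T ∧ ∀ y ∈ T, ∀ z ∈ T, y < z → (∀ w ∈ T, ¬(y < w ∧ w < z)) → y ∈ S ∨ z ∈ S

/-!
Every closed interval `[a, b]` with endpoints `a < b` in `T` contains an element of `S`: apply
the skip property to `b` and its predecessor in `T`. So two elements of `T` below `x` force an
element of `S` below `x`, and an element of `T` lying strictly between the greatest `u ∈ S`
below `x` and the greatest `m ∈ T` below `x` would force an element of `S` in `(u, m]`.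
-/

open Finset

namespace SkipProperty

variable {α : Type*} [LinearOrder α] {S T : Finset α}

theorem exists_mem_Icc (h : SkipProperty S T) {a b : α} (ha : a ∈ T) (hb : b ∈ T)
    (hab : a < b) : ∃ c ∈ S, c ∈ Set.Icc a b := by
  obtain ⟨y, hy, hy_max⟩ :=
    (T.filter (· ∈ Set.Ico a b)).exists_max_image id ⟨a, mem_filter.2 ⟨ha, le_rfl, hab⟩⟩
  obtain ⟨hyT, hay, hyb⟩ := mem_filter.1 hy
  have hy_pred : ∀ w ∈ T, ¬(y < w ∧ w < b) := fun w hw ⟨hyw, hwb⟩ =>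
    hyw.not_ge (hy_max w (mem_filter.2 ⟨hw, hay.trans hyw.le, hwb⟩))
  rcases h.2 y hyT b hb hyb hy_pred with hyS | hbS
  · exact ⟨y, hyS, hay, hyb.le⟩
  · exact ⟨b, hbS, hab.le, le_rfl⟩

theorem card_filter_lt_le_one (h : SkipProperty S T) {x : α} (hS : ∀ s ∈ S, ¬s < x) :
    #(T.filter (· < x)) ≤ 1 := by
  have no_lt : ∀ a ∈ T.filter (· < x), ∀ b ∈ T.filter (· < x), ¬a < b := by
    intro a ha b hb hab
    obtain ⟨c, hcS, -, hcb⟩ := h.exists_mem_Icc (mem_filter.1 ha).1 (mem_filter.1 hb).1 hab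
    exact hS c hcS (hcb.trans_lt (mem_filter.1 hb).2)
  exact card_le_one.2 fun a ha b hb => le_antisymm (le_of_not_gt (no_lt b hb a ha))
    (le_of_not_gt (no_lt a ha b hb))

theorem isLeast_of_forall_le_imp_le (h : SkipProperty S T) {u m : α} (hm : m ∈ T)
    (hum : u < m) (hS : ∀ s ∈ S, s ≤ m → s ≤ u) : IsLeast {t | t ∈ T ∧ u < t} m := by
  refine ⟨⟨hm, hum⟩, fun t ⟨ht, hut⟩ => le_of_not_gt fun htm => ?_⟩
  obtain ⟨c, hcS, htc, hcm⟩ := h.exists_mem_Icc ht hm htm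
  exact (hut.trans_le htc).not_ge (hS c hcS hcm)

end SkipProperty

/-- Correctness of todolist search: (a) if `T` has an element less than `x` but `S` does not,
then `T` has exactly one element less than `x`; (b) if `u` is the greatest element of `S`
below `x`, then the greatest element of `T` below `x` is `u` itself or the least element of
`T` above `u`. -/
theorem skipProperty_search {α : Type*} [LinearOrder α] (S T : Finset α)
    (h : SkipProperty S T) (x : α) :
    (((T.filter (fun t => t < x)).Nonempty → (∀ s ∈ S, ¬ s < x) →
        (T.filter (fun t => t < x)).card = 1)) ∧
    (∀ u : α, IsGreatest {s : α | s ∈ S ∧ s < x} u →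
        IsGreatest {t : α | t ∈ T ∧ t < x} u ∨
        ∃ v : α, IsLeast {t : α | t ∈ T ∧ u < t} v ∧
          IsGreatest {t : α | t ∈ T ∧ t < x} v) := by
  refine ⟨fun hne hS => le_antisymm (h.card_filter_lt_le_one hS) hne.card_pos, ?_⟩
  rintro u ⟨⟨huS, hux⟩, hu_max⟩
  have hne : (T.filter (· < x)).Nonempty := ⟨u, mem_filter.2 ⟨h.1 huS, hux⟩⟩
  have hm : IsGreatest {t | t ∈ T ∧ t < x} ((T.filter (· < x)).max' hne) := by
    simpa only [coe_filter] using isGreatest_max' _ hne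
  rcases (hm.2 ⟨h.1 huS, hux⟩ : u ≤ _).eq_or_lt with hum | hum
  · exact .inl (hum ▸ hm)
  · exact .inr ⟨_, h.isLeast_of_forall_le_imp_le hm.1.1 hum
      (fun s hs hsm => hu_max ⟨hs, hsm.trans_lt hm.1.2⟩), hm⟩
end

section
/- Let α be a linear order, let T be a finite subset of α with |T| = m, and let t_1 < t_2 < ⋯ < t_m be the increasing enumeration of T. Let S = {t_{2k} : k ≥ 1, 2k ≤ m} be the set of elements of T at even positions. Then the pair (S, T) satisfies the skip property and |S| = ⌊m/2⌋. -/
/-!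
Consecutive elements `y < z` of `T` are exactly the covering pairs `y ⋖ z` of the subtype `T`,
and the enumeration `Fin m ≃o T` identifies these with the pairs of positions `(i, i + 1)`.
Of two consecutive positions one is odd, so `(S, T)` has the skip property.
-/

open Finset

theorem SkipProperty.image_orderIso {α ι : Type*} [LinearOrder α] [Preorder ι] {T : Finset α}
    (e : ι ≃o T) (P : Finset ι) (hP : ∀ ⦃i j : ι⦄, i ⋖ j → i ∈ P ∨ j ∈ P) :
    SkipProperty (P.image fun i => (e i : α)) T := by
  refine ⟨fun x hx => ?_, fun y hy z hz hyz hgap => ?_⟩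
  · obtain ⟨i, -, rfl⟩ := mem_image.1 hx
    exact (e i).2
  · have hcov : (⟨y, hy⟩ : T) ⋖ ⟨z, hz⟩ := ⟨hyz, fun w hyw hwz => hgap w w.2 ⟨hyw, hwz⟩⟩
    have hmem {x : α} (hx : x ∈ T) (h : e.symm ⟨x, hx⟩ ∈ P) : x ∈ P.image fun i => (e i : α) :=
      mem_image.2 ⟨_, h, by simp⟩
    exact (hP ((apply_covBy_apply_iff e.symm).2 hcov)).imp (hmem hy) (hmem hz)

theorem Nat.mod_two_eq_one_or_of_covBy {a b : ℕ} (h : a ⋖ b) : a % 2 = 1 ∨ b % 2 = 1 := by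
  rw [Nat.covBy_iff_add_one_eq] at h
  omega

theorem Fin.card_filter_val_mod_two_eq_one (m : ℕ) :
    #{p : Fin m | p.val % 2 = 1} = m / 2 := by
  have hcount : m.count (· ≡ 1 [MOD 2]) = m / 2 := by
    rw [Nat.count_modEq_card m two_pos 1, if_neg (by omega), add_zero]
  rw [← hcount, Nat.count_eq_card_filter_range, ← Nat.Iio_eq_range, ← Fin.map_valEmbedding_univ,
    filter_map, card_map]
  -- `x ≡ 1 [MOD 2]` unfolds to `x % 2 = 1`
  rfl

/-- Taking every second element of `T` (the elements at even positions in the increasing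
enumeration `t_1 < t_2 < ⋯ < t_m` of `T`) yields a set `S` such that `(S, T)` satisfies the
skip property and `|S| = ⌊m/2⌋`. -/
theorem skipProperty_every_second {α : Type*} [LinearOrder α] (T : Finset α) (m : ℕ)
    (hm : T.card = m) (S : Finset α)
    (hS : S = (Finset.univ.filter (fun p : Fin m => p.val % 2 = 1)).image
        (fun p => (T.orderIsoOfFin hm p : α))) :
    SkipProperty S T ∧ S.card = m / 2 := by
  subst hS
  refine ⟨SkipProperty.image_orderIso _ _ fun i j hij => ?_, ?_⟩
  · simpa using Nat.mod_two_eq_one_or_of_covBy (Fin.covBy_iff.1 hij)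
  · rw [card_image_of_injective _ fun i j hij => (T.orderIsoOfFin hm).injective (Subtype.ext hij),
      Fin.card_filter_val_mod_two_eq_one]
end

section
/- Let α be a linear order, let S and T be finite subsets of α such that the pair (S, T) satisfies the skip property, and let x ∈ α. Then the pair (S ∪ {x}, T ∪ {x}) also satisfies the skip property. -/
/- A gap of `U ∪ T` with an endpoint in `U` is covered by that endpoint; otherwise both
endpoints lie in `T`, and it is also a gap of the smaller set `T`. -/
theorem SkipProperty.union_left {α : Type*} [LinearOrder α] {S T : Finset α}
    (h : SkipProperty S T) (U : Finset α) : SkipProperty (U ∪ S) (U ∪ T) := by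
  obtain ⟨hST, hgap⟩ := h
  refine ⟨Finset.union_subset_union le_rfl hST, fun y hy z hz hyz hempty => ?_⟩
  rcases Finset.mem_union.1 hy with hyU | hyT
  · exact Or.inl (Finset.mem_union_left _ hyU)
  rcases Finset.mem_union.1 hz with hzU | hzT
  · exact Or.inr (Finset.mem_union_left _ hzU)
  have hemptyT : ∀ w ∈ T, ¬(y < w ∧ w < z) := fun w hw => hempty w (Finset.mem_union_right _ hw)
  exact (hgap y hyT z hzT hyz hemptyT).imp (Finset.mem_union_right _) (Finset.mem_union_right _)

/-- Correctness of todolist insertion: inserting `x` into both lists preserves the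
skip property. -/
theorem skipProperty_insert {α : Type*} [LinearOrder α] (S T : Finset α)
    (h : SkipProperty S T) (x : α) :
    SkipProperty (insert x S) (insert x T) := by
  simpa only [Finset.insert_eq] using h.union_left {x}
end

section
/- Let α be a linear order, let S and T be finite subsets of α such that the pair (S, T) satisfies the skip property, let x ∈ T, and suppose the set {t ∈ T : x < t} is nonempty with least element y. Then the pair ((S \ {x}) ∪ {y}, T \ {x}) satisfies the skip property. -/
section Erase

variable {α : Type*} [LinearOrder α] {T : Finset α} {x y a b : α}

theorem eq_of_isLeast_of_straddle (hy : IsLeast {t : α | t ∈ T ∧ x < t} y)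
    (hb : b ∈ T) (hax : a < x) (hxb : x < b)
    (hgap : ∀ w ∈ T.erase x, ¬(a < w ∧ w < b)) : y = b := by
  obtain ⟨⟨hyT, hxy⟩, hylb⟩ := hy
  refine (hylb ⟨hb, hxb⟩).eq_or_lt.resolve_right fun hyb ↦ ?_
  exact hgap y (Finset.mem_erase.mpr ⟨hxy.ne', hyT⟩) ⟨hax.trans hxy, hyb⟩

theorem not_between_of_not_between_erase (hx : ¬(a < x ∧ x < b))
    (hgap : ∀ w ∈ T.erase x, ¬(a < w ∧ w < b)) : ∀ w ∈ T, ¬(a < w ∧ w < b) := by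
  intro w hw
  rcases eq_or_ne w x with rfl | hwx
  · exact hx
  · exact hgap w (Finset.mem_erase.mpr ⟨hwx, hw⟩)

end Erase

theorem skipProperty_delete_general {α : Type*} [LinearOrder α] (S T : Finset α)
    (h : SkipProperty S T) (x : α) (y : α)
    (hy : IsLeast {t : α | t ∈ T ∧ x < t} y) :
    SkipProperty (insert y (S.erase x)) (T.erase x) := by
  obtain ⟨hST, hskip⟩ := h
  have hyT : y ∈ T.erase x := Finset.mem_erase.mpr ⟨hy.1.2.ne', hy.1.1⟩
  refine ⟨Finset.insert_subset hyT (Finset.erase_subset_erase x hST), ?_⟩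
  intro a ha b hb hab hgap
  obtain ⟨hax, haT⟩ := Finset.mem_erase.mp ha
  obtain ⟨hbx, hbT⟩ := Finset.mem_erase.mp hb
  by_cases hstraddle : a < x ∧ x < b
  · rw [← eq_of_isLeast_of_straddle hy hbT hstraddle.1 hstraddle.2 hgap]
    exact Or.inr (Finset.mem_insert_self _ _)
  · have hgapT := not_between_of_not_between_erase hstraddle hgap
    refine (hskip a haT b hbT hab hgapT).imp (fun haS ↦ ?_) fun hbS ↦ ?_
    · exact Finset.mem_insert_of_mem (Finset.mem_erase.mpr ⟨hax, haS⟩)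
    · exact Finset.mem_insert_of_mem (Finset.mem_erase.mpr ⟨hbx, hbS⟩)

/-- Correctness of todolist deletion: deleting `x` from both lists and splicing the
successor `y` of `x` in `T` into `S` preserves the skip property. -/
theorem skipProperty_delete {α : Type*} [LinearOrder α] (S T : Finset α)
    (h : SkipProperty S T) (x : α) (hx : x ∈ T) (y : α)
    (hy : IsLeast {t : α | t ∈ T ∧ x < t} y) :
    SkipProperty (insert y (S.erase x)) (T.erase x) :=
  skipProperty_delete_general S T h x y hy
end

section
/- Let ε be a real number with 0 < ε < 2, let i be a natural number, and let b : ℕ → ℝ be a nonnegative function satisfying b(j) ≤ (2−ε)^j + b(j+1)/2 for every j < i, and suppose b(i) ≤ 2^i. Then b(0) ≤ 2/ε + 1. -/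
/-!
Unrolling `b j ≤ (2-ε)^j + b (j+1) / 2` down from `i` gives
`b 0 ≤ ∑_{j<i} ((2-ε)/2)^j + b i / 2^i`. The geometric sum is at most `1 / (1 - (2-ε)/2) = 2/ε`,
and `b i ≤ 2^i` bounds the remainder by `1`.
-/

open Finset

theorem le_sum_pow_mul_add_pow_mul_of_forall_le_add_mul {R : Type*} [CommSemiring R]
    [PartialOrder R] [IsOrderedRing R] {a b : ℕ → R} {c : R} (hc : 0 ≤ c) {n : ℕ}
    (h : ∀ j < n, b j ≤ a j + c * b (j + 1)) :
    b 0 ≤ ∑ j ∈ range n, c ^ j * a j + c ^ n * b n := by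
  induction n with
  | zero => simp
  | succ m ih =>
    calc b 0 ≤ ∑ j ∈ range m, c ^ j * a j + c ^ m * b m := ih fun j hj => h j (by omega)
      _ ≤ ∑ j ∈ range m, c ^ j * a j + c ^ m * (a m + c * b (m + 1)) := by
        gcongr
        exact h m m.lt_succ_self
      _ = ∑ j ∈ range (m + 1), c ^ j * a j + c ^ (m + 1) * b (m + 1) := by
        rw [sum_range_succ]; ring

theorem geom_sum_range_le_of_lt_one {K : Type*} [Field K] [LinearOrder K]
    [IsStrictOrderedRing K] {x : K} (hx : 0 ≤ x) (h'x : x < 1) (n : ℕ) :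
    ∑ j ∈ range n, x ^ j ≤ 1 / (1 - x) := by
  simpa only [range_eq_Ico, pow_zero] using geom_sum_Ico_le_of_lt_one (m := 0) (n := n) hx h'x

theorem working_todolist_L0_bound_general (ε : ℝ) (hε0 : 0 < ε) (hε2 : ε < 2) (i : ℕ)
    (b : ℕ → ℝ)
    (hrec : ∀ j < i, b j ≤ (2 - ε) ^ j + b (j + 1) / 2)
    (htop : b i ≤ 2 ^ i) :
    b 0 ≤ 2 / ε + 1 := by
  have hunrolled : b 0 ≤ ∑ j ∈ range i, 2⁻¹ ^ j * (2 - ε) ^ j + 2⁻¹ ^ i * b i :=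
    le_sum_pow_mul_add_pow_mul_of_forall_le_add_mul (by norm_num) fun j hj => by
      simpa only [div_eq_inv_mul] using hrec j hj
  have hgeom : ∑ j ∈ range i, 2⁻¹ ^ j * (2 - ε) ^ j ≤ 2 / ε := by
    simp_rw [← mul_pow]
    have := geom_sum_range_le_of_lt_one (x := 2⁻¹ * (2 - ε)) (by linarith) (by linarith) i
    rwa [show 1 - 2⁻¹ * (2 - ε) = ε / 2 by ring, one_div_div] at this
  have hrest : 2⁻¹ ^ i * b i ≤ 1 := by
    rw [inv_pow]
    exact inv_mul_le_one_of_le₀ htop (by positivity)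
  linarith

/-- Property 1 of working-todolists is restored by partial rebuilding: if `b` is
nonnegative, satisfies `b j ≤ (2-ε)^j + b (j+1) / 2` for `j < i`, and `b i ≤ 2^i`, then
`b 0 ≤ 2/ε + 1`. -/
theorem working_todolist_L0_bound (ε : ℝ) (hε0 : 0 < ε) (hε2 : ε < 2) (i : ℕ)
    (b : ℕ → ℝ) (hb : ∀ j, 0 ≤ b j)
    (hrec : ∀ j < i, b j ≤ (2 - ε) ^ j + b (j + 1) / 2)
    (htop : b i ≤ 2 ^ i) :
    b 0 ≤ 2 / ε + 1 :=
  working_todolist_L0_bound_general ε hε0 hε2 i b hrec htop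
end

section
/- Let ε be a real number with 0 < ε < 1, let i ≥ 1 be a natural number, and let N be a real number with 0 ≤ N ≤ (2−ε/2)^i. Then ∑_{j=0}^{i−1} ((2−ε)^j/ε + N/2^{i−j} − (2−ε/2)^j) ≤ (2−ε)^i/(ε(1−ε)) − (ε/2)·N + (1 + ε/2). -/
/-!
Each of the three sums is geometric. The `(2 - ε)`-sum is at most `(2 - ε)^i / (1 - ε)`, the halving
sum equals `N (1 - 2^{-i}) ≤ N`, and the `(2 - ε/2)`-sum, which equals `((2 - ε/2)^i - 1) / (1 - ε/2)`,
is at least `(1 + ε/2) ((2 - ε/2)^i - 1)`. The hypothesis `N ≤ (2 - ε/2)^i` then trades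
`(1 + ε/2) N` against `(1 + ε/2) (2 - ε/2)^i`, leaving `-(ε/2) N + (1 + ε/2)`.
-/

open Finset

lemma sum_div_two_pow_sub {K : Type*} [Field K] [NeZero (2 : K)] (x : K) (n : ℕ) :
    ∑ j ∈ range n, x / 2 ^ (n - j) = x * (1 - 1 / 2 ^ n) := by
  induction n with
  | zero => simp
  | succ n ih =>
    rw [sum_range_succ']
    simp only [Nat.add_sub_add_right, ih, Nat.sub_zero, pow_succ]
    field_simp
    ring

lemma geom_sum_le_pow_div_sub_one {r : ℝ} (hr : 1 < r) (n : ℕ) :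
    ∑ j ∈ range n, r ^ j ≤ r ^ n / (r - 1) := by
  rw [geom_sum_eq hr.ne']
  gcongr
  linarith

lemma three_sub_mul_pow_sub_one_le_geom_sum {r : ℝ} (hr : 1 < r) (n : ℕ) :
    (3 - r) * (r ^ n - 1) ≤ ∑ j ∈ range n, r ^ j := by
  rw [geom_sum_eq hr.ne', le_div_iff₀ (sub_pos.2 hr)]
  have hpow : 1 ≤ r ^ n := one_le_pow₀ hr.le
  -- `(3 - r) * (r - 1) = 1 - (r - 2) ^ 2 ≤ 1`
  nlinarith [mul_nonneg (sub_nonneg.2 hpow) (sq_nonneg (r - 2))]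

theorem working_todolist_potential_change_general (ε : ℝ) (hε0 : 0 < ε) (hε1 : ε < 1)
    (i : ℕ) (N : ℝ) (hN0 : 0 ≤ N) (hN : N ≤ (2 - ε / 2) ^ i) :
    ∑ j ∈ Finset.range i, ((2 - ε) ^ j / ε + N / 2 ^ (i - j) - (2 - ε / 2) ^ j)
      ≤ (2 - ε) ^ i / (ε * (1 - ε)) - (ε / 2) * N + (1 + ε / 2) := by
  have hfast : ∑ j ∈ range i, (2 - ε) ^ j / ε ≤ (2 - ε) ^ i / (ε * (1 - ε)) :=
    calc ∑ j ∈ range i, (2 - ε) ^ j / ε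
        = (∑ j ∈ range i, (2 - ε) ^ j) / ε := (sum_div ..).symm
      _ ≤ (2 - ε) ^ i / (2 - ε - 1) / ε := by
          gcongr; exact geom_sum_le_pow_div_sub_one (by linarith) i
      _ = (2 - ε) ^ i / (ε * (1 - ε)) := by rw [div_div]; ring_nf
  have hslow : (1 + ε / 2) * ((2 - ε / 2) ^ i - 1) ≤ ∑ j ∈ range i, (2 - ε / 2) ^ j :=
    calc (1 + ε / 2) * ((2 - ε / 2) ^ i - 1)
        = (3 - (2 - ε / 2)) * ((2 - ε / 2) ^ i - 1) := by ring
      _ ≤ _ := three_sub_mul_pow_sub_one_le_geom_sum (by linarith) i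
  have hN' : (1 + ε / 2) * N ≤ (1 + ε / 2) * (2 - ε / 2) ^ i := by gcongr
  have hN_div_nonneg : 0 ≤ N * (1 / 2 ^ i) := by positivity
  rw [sum_sub_distrib, sum_add_distrib, sum_div_two_pow_sub]
  linarith [mul_sub N 1 (1 / 2 ^ i)]

/-- Potential-change estimate in the amortized analysis of a working-todolist search. -/
theorem working_todolist_potential_change (ε : ℝ) (hε0 : 0 < ε) (hε1 : ε < 1)
    (i : ℕ) (hi : 1 ≤ i) (N : ℝ) (hN0 : 0 ≤ N) (hN : N ≤ (2 - ε / 2) ^ i) :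
    ∑ j ∈ Finset.range i, ((2 - ε) ^ j / ε + N / 2 ^ (i - j) - (2 - ε / 2) ^ j)
      ≤ (2 - ε) ^ i / (ε * (1 - ε)) - (ε / 2) * N + (1 + ε / 2) :=
  working_todolist_potential_change_general ε hε0 hε1 i N hN0 hN
end
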